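/- Let k ≥ 1, s a positive integer coprime to all primes ≤ k, and suppose the set X_{n,k,s} = {x ∈ {1,...,n} : β_*(x) = s} has at least r elements where r ≤ k. Then the r smallest elements of X_{n,k,s} are exactly s, 2s, 3s, ..., rs, and any two of them are adjacent in G_{n,k} (i.e., they form a clique). -/

import Mathlib

/-- `betaStar k x` is the largest divisor of `x` coprime to all primes `≤ k`. -/
def betaStar (k x : ℕ) : ℕ :=
  ∏ p ∈ x.primeFactors.filter (fun p => k < p), p ^ x.factorization p

/-- The graph on `{1, …, n}` where `x ~ y` iff `x ≠ y` and `a*x = b*y`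
for some `a, b ∈ {1, …, k}`. -/
def GMult (n k : ℕ) : SimpleGraph ℕ where
  Adj x y := x ≠ y ∧ x ∈ Finset.Icc 1 n ∧ y ∈ Finset.Icc 1 n ∧
    ∃ a b : ℕ, 1 ≤ a ∧ a ≤ k ∧ 1 ≤ b ∧ b ≤ k ∧ a * x = b * y
  symm := ⟨fun _ _ ⟨hxy, hx, hy, a, b, ha1, hak, hb1, hbk, hab⟩ =>
    ⟨hxy.symm, hy, hx, b, a, hb1, hbk, ha1, hak, hab.symm⟩⟩
  loopless := ⟨fun _ ⟨hxx, _⟩ => hxx rfl⟩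


/-! Since `betaStar k x ∣ x`, every `x ≤ n` with `betaStar k x = s` is a positive multiple
`c * s`; there are at most `n / s` of them, so `r ≤ n / s`, i.e. `r * s ≤ n`. For `i ≤ k` the prime
factors of `i` are `≤ k` and those of `s` are `> k`, so `betaStar k (i * s) = s`. Hence
`s, 2s, …, rs` lie in the set, every other element is `c * s` with `c > r`, and `i * s`, `j * s`
are adjacent through `j * (i * s) = i * (j * s)`. -/

lemma betaStar_dvd (k x : ℕ) : betaStar k x ∣ x := by
  rcases eq_or_ne x 0 with rfl | hx
  · exact dvd_zero _
  · conv_rhs => rw [Nat.prod_primeFactors_pow_factorization hx]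
    exact Finset.prod_dvd_prod_of_subset _ _ _ (Finset.filter_subset _ _)

lemma betaStar_mul_of_prime_dvd {k m s : ℕ} (hm : m ≠ 0) (hs : s ≠ 0)
    (hmk : ∀ p : ℕ, p.Prime → p ∣ m → p ≤ k) (hsk : ∀ p : ℕ, p.Prime → p ∣ s → k < p) :
    betaStar k (m * s) = s := by
  have hfactors : (m * s).primeFactors.filter (fun p => k < p) = s.primeFactors := by
    ext p
    simp only [Finset.mem_filter, Nat.primeFactors_mul hm hs, Finset.mem_union,
      Nat.mem_primeFactors]
    constructor
    · rintro ⟨⟨hp, hpm, -⟩ | hps, hkp⟩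
      · exact absurd (hmk p hp hpm) (not_le.mpr hkp)
      · exact hps
    · exact fun hps => ⟨Or.inr hps, hsk p hps.1 hps.2.1⟩
  have hexp : ∀ p ∈ s.primeFactors, (m * s).factorization p = s.factorization p := by
    intro p hp
    have hpm : ¬ p ∣ m := fun hpm =>
      (hsk p (Nat.prime_of_mem_primeFactors hp) (Nat.dvd_of_mem_primeFactors hp)).not_ge
        (hmk p (Nat.prime_of_mem_primeFactors hp) hpm)
    rw [Nat.factorization_mul hm hs, Finsupp.add_apply,
      Nat.factorization_eq_zero_of_not_dvd hpm, zero_add]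
  rw [betaStar, hfactors, Finset.prod_congr rfl fun p hp => by rw [hexp p hp],
    ← Nat.prod_primeFactors_pow_factorization hs]

lemma card_filter_betaStar_eq_le (n k s : ℕ) :
    ((Finset.Icc 1 n).filter (fun x => betaStar k x = s)).card ≤ n / s := by
  rw [← Nat.Ioc_filter_dvd_card_eq_div n s]
  refine Finset.card_le_card (Finset.monotone_filter_right _ ?_)
  rintro x - rfl
  exact betaStar_dvd k x

theorem stmt17_general (n k s r : ℕ) (hs : 1 ≤ s)
    (hcop : ∀ p : ℕ, p.Prime → p ≤ k → ¬ p ∣ s) (hrk : r ≤ k)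
    (hcard : r ≤ ((Finset.Icc 1 n).filter (fun x => betaStar k x = s)).card) :
    (∀ i, 1 ≤ i → i ≤ r →
        i * s ∈ (Finset.Icc 1 n).filter (fun x => betaStar k x = s)) ∧
    (∀ x ∈ (Finset.Icc 1 n).filter (fun x => betaStar k x = s),
        (∀ i, 1 ≤ i → i ≤ r → x ≠ i * s) → r * s < x) ∧
    (∀ i j, 1 ≤ i → i ≤ r → 1 ≤ j → j ≤ r → i ≠ j →
        (GMult n k).Adj (i * s) (j * s)) := by
  have hrs : r * s ≤ n :=
    Nat.mul_le_of_le_div s r n (hcard.trans (card_filter_betaStar_eq_le n k s))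
  have hsk : ∀ p : ℕ, p.Prime → p ∣ s → k < p := fun p hp hps =>
    not_le.mp fun hpk => hcop p hp hpk hps
  have hmem : ∀ i, 1 ≤ i → i ≤ r →
      i * s ∈ (Finset.Icc 1 n).filter (fun x => betaStar k x = s) := by
    intro i hi hir
    have hik : ∀ p : ℕ, p.Prime → p ∣ i → p ≤ k := fun p _ hpi =>
      (Nat.le_of_dvd hi hpi).trans (hir.trans hrk)
    refine Finset.mem_filter.mpr ⟨Finset.mem_Icc.mpr ⟨?_, ?_⟩, ?_⟩
    · exact Nat.mul_pos hi hs
    · exact (Nat.mul_le_mul_right s hir).trans hrs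
    · exact betaStar_mul_of_prime_dvd (by omega) (by omega) hik hsk
  refine ⟨hmem, ?_, ?_⟩
  · intro x hx hne
    obtain ⟨hxn, hxs⟩ := Finset.mem_filter.mp hx
    obtain ⟨c, rfl⟩ := hxs ▸ betaStar_dvd k x
    have hc : 1 ≤ c := Nat.pos_of_mul_pos_left (Finset.mem_Icc.mp hxn).1
    have hrc : r < c := not_le.mp fun hcr => hne c hc hcr (mul_comm s c)
    exact (Nat.mul_lt_mul_of_pos_right hrc hs).trans_eq (mul_comm c s)
  · intro i j hi hir hj hjr hij
    refine ⟨fun h => hij (Nat.eq_of_mul_eq_mul_right hs h),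
      (Finset.mem_filter.mp (hmem i hi hir)).1, (Finset.mem_filter.mp (hmem j hj hjr)).1,
      j, i, hj, hjr.trans hrk, hi, hir.trans hrk, by ring⟩

theorem stmt17 (n k s r : ℕ) (hk : 1 ≤ k) (hs : 1 ≤ s)
    (hcop : ∀ p : ℕ, p.Prime → p ≤ k → ¬ p ∣ s) (hrk : r ≤ k)
    (hcard : r ≤ ((Finset.Icc 1 n).filter (fun x => betaStar k x = s)).card) :
    (∀ i, 1 ≤ i → i ≤ r →
        i * s ∈ (Finset.Icc 1 n).filter (fun x => betaStar k x = s)) ∧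
    (∀ x ∈ (Finset.Icc 1 n).filter (fun x => betaStar k x = s),
        (∀ i, 1 ≤ i → i ≤ r → x ≠ i * s) → r * s < x) ∧
    (∀ i j, 1 ≤ i → i ≤ r → 1 ≤ j → j ≤ r → i ≠ j →
        (GMult n k).Adj (i * s) (j * s)) :=
  stmt17_general n k s r hs hcop hrk hcard
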